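/- arXiv:1112.2975 — 3 statements merged into one kernel-verified Lean document; each statement's English description precedes it below -/
import Mathlib

section
/- Let X be a reflexive Banach space with dual X*, and let I : X → X* be a bounded linear operator that is self-adjoint (⟨x, I·z⟩ = ⟨z, I·x⟩ for all x, z) and strictly positive (⟨x, I·x⟩ > 0 for all x ≠ 0). Then there exists a Hilbert space H and an injective bounded linear operator T : X → H with dense image such that, defining T̃ : H → X* by ⟨x, T̃·y⟩_{X×X*} = ⟨T·x, y⟩_{H×H}, one has T̃ ∘ T = I. -/
/-- A realization of a self-adjoint strictly positive operator `I : X → X*` through a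
Hilbert space: a Hilbert space `H` together with an injective bounded linear operator
`T : X → H` with dense image such that `⟨x, I·z⟩ = ⟨T·x, T·z⟩_H`, i.e. `T̃ ∘ T = I` where
`T̃ : H → X*` is defined by `⟨x, T̃·y⟩ = ⟨T·x, y⟩_H`. -/
structure EvolutionRealization (X : Type) [NormedAddCommGroup X] [NormedSpace ℝ X]
    (I : X →L[ℝ] StrongDual ℝ X) where
  H : Type
  [instNorm : NormedAddCommGroup H]
  [instInner : InnerProductSpace ℝ H]
  [instComplete : CompleteSpace H]
  T : X →L[ℝ] H
  inj : Function.Injective T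
  dense : DenseRange T
  factor : ∀ x z : X, I z x = (inner ℝ (T x) (T z) : ℝ)

/-- Type copy of `X` on which we put the inner product induced by `I`. -/
def EvolutionCopy (X : Type) : Type := X

/-- Let `X` be a reflexive Banach space and `I : X → X*` a bounded linear operator which is
self-adjoint and strictly positive. Then there exists a Hilbert space `H` and an injective
bounded linear operator `T : X → H` with dense image such that `T̃ ∘ T = I`. -/
theorem stmt_7 (X : Type) [NormedAddCommGroup X] [NormedSpace ℝ X] [CompleteSpace X]
    (hrefl : Function.Surjective (NormedSpace.inclusionInDoubleDual ℝ X))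
    (I : X →L[ℝ] StrongDual ℝ X)
    (hsym : ∀ x z : X, I z x = I x z)
    (hpos : ∀ x : X, x ≠ 0 → 0 < I x x) :
    Nonempty (EvolutionRealization X I) := by
  letI : AddCommGroup (EvolutionCopy X) := inferInstanceAs (AddCommGroup X)
  letI : Module ℝ (EvolutionCopy X) := inferInstanceAs (Module ℝ X)
  have hnonneg : ∀ x : X, 0 ≤ I x x := by
    intro x
    rcases eq_or_ne x 0 with h | h
    · simp [h]
    · exact (hpos x h).le
  letI core : InnerProductSpace.Core ℝ (EvolutionCopy X) :=
    { inner := fun x z => I (show X from z) (show X from x)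
      conj_inner_symm := fun x z => by
        simpa using hsym (show X from z) (show X from x)
      re_inner_nonneg := fun x => by simpa using hnonneg (show X from x)
      add_left := fun x y z => by
        exact map_add (I (show X from z)) (show X from x) (show X from y)
      smul_left := fun x y r => by
        rw [conj_trivial]
        exact map_smul (I (show X from y)) r (show X from x)
      definite := fun x hx => by
        by_contra h
        exact (hpos (show X from x) h).ne' hx }
  letI : NormedAddCommGroup (EvolutionCopy X) := core.toNormedAddCommGroup
  letI : InnerProductSpace ℝ (EvolutionCopy X) := InnerProductSpace.ofCore core.toCore
  -- the identity map `X → EvolutionCopy X` is continuous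
  let j : X →ₗ[ℝ] EvolutionCopy X :=
    { toFun := fun x => x
      map_add' := fun _ _ => rfl
      map_smul' := fun _ _ => rfl }
  have hnorm_sq : ∀ x : X, ‖j x‖ ^ 2 = I x x := by
    intro x
    rw [← real_inner_self_eq_norm_sq (j x)]
    rfl
  have hjbound : ∀ x : X, ‖j x‖ ≤ Real.sqrt ‖I‖ * ‖x‖ := by
    intro x
    have h1 : ‖j x‖ ^ 2 = I x x := hnorm_sq x
    have h2 : I x x ≤ ‖I‖ * ‖x‖ * ‖x‖ := by
      calc I x x ≤ ‖I x x‖ := le_abs_self _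
        _ ≤ ‖I x‖ * ‖x‖ := (I x).le_opNorm x
        _ ≤ ‖I‖ * ‖x‖ * ‖x‖ := by
            gcongr
            exact I.le_opNorm x
    have h3 : ‖j x‖ ^ 2 ≤ (Real.sqrt ‖I‖ * ‖x‖) ^ 2 := by
      rw [h1, mul_pow, Real.sq_sqrt (norm_nonneg I)]
      calc I x x ≤ ‖I‖ * ‖x‖ * ‖x‖ := h2
        _ = ‖I‖ * ‖x‖ ^ 2 := by ring
    calc ‖j x‖ = Real.sqrt (‖j x‖ ^ 2) := (Real.sqrt_sq (norm_nonneg _)).symm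
      _ ≤ Real.sqrt ((Real.sqrt ‖I‖ * ‖x‖) ^ 2) := Real.sqrt_le_sqrt h3
      _ = Real.sqrt ‖I‖ * ‖x‖ := Real.sqrt_sq (by positivity)
  let jL : X →L[ℝ] EvolutionCopy X := j.mkContinuous (Real.sqrt ‖I‖) hjbound
  let T : X →L[ℝ] UniformSpace.Completion (EvolutionCopy X) :=
    (UniformSpace.Completion.toComplL).comp jL
  refine ⟨⟨UniformSpace.Completion (EvolutionCopy X), T, ?_, ?_, ?_⟩⟩
  · intro x z h
    have : (j x : EvolutionCopy X) = j z :=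
      UniformSpace.Completion.coe_injective (EvolutionCopy X) h
    exact this
  · have hj : Function.Surjective j := fun y => ⟨y, rfl⟩
    have := (UniformSpace.Completion.denseRange_coe
      (α := EvolutionCopy X)).comp hj.denseRange
      (by exact UniformSpace.Completion.continuous_coe _)
    exact this
  · intro x z
    have : (inner ℝ (T x) (T z) : ℝ) = inner ℝ (j x) (j z) :=
      UniformSpace.Completion.inner_coe (j x) (j z)
    rw [this]
    rfl
end

section
/- Let X be a separable Banach space. Then there exists a separable Hilbert space Y and a bounded linear operator S : Y → X that is injective, compact, and has dense image in X. -/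
open scoped NNReal ENNReal
open TopologicalSpace Filter

noncomputable section

namespace Stmt13

abbrev H : Type := lp (fun _ : ℕ => ℝ) 2

def evalCLM (n : ℕ) : H →L[ℝ] ℝ :=
  LinearMap.mkContinuous
    { toFun := fun a => a n
      map_add' := fun a b => by simp [lp.coeFn_add]
      map_smul' := fun c a => by simp [lp.coeFn_smul] }
    1 (fun a => by rw [one_mul]; exact lp.norm_apply_le_norm (by norm_num) a n)

@[simp] lemma evalCLM_apply (n : ℕ) (a : H) : evalCLM n a = a n := rfl

lemma rankOne_compact {X : Type} [NormedAddCommGroup X] [NormedSpace ℝ X] (c : X) :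
    IsCompactOperator (fun r : ℝ => r • c) := by
  refine ⟨(fun r : ℝ => r • c) '' Metric.closedBall 0 1, ?_, ?_⟩
  · exact (isCompact_closedBall (0:ℝ) 1).image (by continuity)
  · exact Filter.mem_of_superset (Metric.closedBall_mem_nhds 0 one_pos)
      (Set.subset_preimage_image _ _)

variable {X : Type} [NormedAddCommGroup X] [NormedSpace ℝ X] [CompleteSpace X]
variable {c : ℕ → X} (hc : ∀ n, ‖c n‖ ≤ (1/2)^n)

lemma summable_aux (hc : ∀ n, ‖c n‖ ≤ (1/2)^n) (a : H) :
    Summable (fun n => a n • c n) := by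
  apply Summable.of_norm_bounded (g := fun n => ‖a‖ * (1/2)^n)
    (summable_geometric_two.mul_left _)
  intro n
  rw [norm_smul]
  exact mul_le_mul (lp.norm_apply_le_norm (by norm_num) a n) (hc n)
    (norm_nonneg _) (norm_nonneg _)

lemma summable_norm_aux (hc : ∀ n, ‖c n‖ ≤ (1/2)^n) (a : H) :
    Summable (fun n => ‖a n • c n‖) := by
  apply Summable.of_nonneg_of_le (fun n => norm_nonneg _) _
    (summable_geometric_two.mul_left ‖a‖)
  intro n
  rw [norm_smul]
  exact mul_le_mul (lp.norm_apply_le_norm (by norm_num) a n) (hc n)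
    (norm_nonneg _) (norm_nonneg _)

def Tlin (hc : ∀ n, ‖c n‖ ≤ (1/2)^n) : H →ₗ[ℝ] X where
  toFun a := ∑' n, a n • c n
  map_add' a b := by
    rw [← Summable.tsum_add (summable_aux hc a) (summable_aux hc b)]
    exact tsum_congr fun n => by simp [lp.coeFn_add, add_smul]
  map_smul' r a := by
    rw [RingHom.id_apply, ← Summable.tsum_const_smul r (summable_aux hc a)]
    exact tsum_congr fun n => by simp [lp.coeFn_smul, smul_smul]

lemma Tlin_bound (hc : ∀ n, ‖c n‖ ≤ (1/2)^n) (a : H) : ‖Tlin hc a‖ ≤ 2 * ‖a‖ := by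
  calc ‖Tlin hc a‖ ≤ ∑' n, ‖a n • c n‖ :=
        norm_tsum_le_tsum_norm (summable_norm_aux hc a)
    _ ≤ ∑' n, ‖a‖ * (1/2)^n := by
        apply Summable.tsum_le_tsum _ (summable_norm_aux hc a) (summable_geometric_two.mul_left _)
        intro n
        rw [norm_smul]
        exact mul_le_mul (lp.norm_apply_le_norm (by norm_num) a n) (hc n)
          (norm_nonneg _) (norm_nonneg _)
    _ = 2 * ‖a‖ := by rw [tsum_mul_left, tsum_geometric_two]; ring

def T (hc : ∀ n, ‖c n‖ ≤ (1/2)^n) : H →L[ℝ] X :=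
  LinearMap.mkContinuous (Tlin hc) 2 (Tlin_bound hc)

@[simp] lemma T_apply (a : H) : T hc a = ∑' n, a n • c n := rfl

lemma T_single (n : ℕ) : T hc (lp.single 2 n (1:ℝ)) = c n := by
  rw [T_apply]
  rw [tsum_eq_single n]
  · rw [lp.single_apply_self, one_smul]
  · intro m hm
    rw [lp.single_apply_ne 2 n _ hm, zero_smul]

def TN (hc : ∀ n, ‖c n‖ ≤ (1/2)^n) (N : ℕ) : H →L[ℝ] X :=
  ∑ n ∈ Finset.range N, (evalCLM n).smulRight (c n)

lemma TN_compact (N : ℕ) : IsCompactOperator (TN hc N) := by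
  have : TN hc N ∈ compactOperator (RingHom.id ℝ) H X := by
    apply Submodule.sum_mem
    intro n _
    have h : ⇑((evalCLM n).smulRight (c n)) = (fun r : ℝ => r • c n) ∘ (evalCLM n) := rfl
    show IsCompactOperator _
    rw [h]
    exact (rankOne_compact (c n)).comp_clm (evalCLM n)
  exact this

lemma TN_apply (N : ℕ) (a : H) : TN hc N a = ∑ n ∈ Finset.range N, a n • c n := by
  simp [TN, ContinuousLinearMap.sum_apply]

lemma T_sub_TN (N : ℕ) (a : H) : ‖T hc a - TN hc N a‖ ≤ ‖a‖ * ((1/2)^N * 2) := by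
  have hsum := Summable.sum_add_tsum_nat_add N (summable_aux hc a)
  have : T hc a - TN hc N a = ∑' i, a (i + N) • c (i + N) := by
    rw [T_apply, TN_apply, ← hsum]; abel
  rw [this]
  calc ‖∑' i, a (i + N) • c (i + N)‖ ≤ ∑' i, ‖a (i + N) • c (i + N)‖ :=
        norm_tsum_le_tsum_norm ((summable_norm_aux hc a).comp_injective (add_left_injective N))
    _ ≤ ∑' i : ℕ, ‖a‖ * ((1/2)^N * (1/2)^i) := by
        apply Summable.tsum_le_tsum _ ((summable_norm_aux hc a).comp_injective (add_left_injective N))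
        · apply Summable.mul_left
          exact (summable_geometric_two.mul_left _)
        · intro i
          simp only [Function.comp_apply]
          rw [norm_smul]
          have h1 : ‖c (i + N)‖ ≤ (1/2)^N * (1/2)^i := by
            rw [← pow_add]
            rw [add_comm N i]
            exact hc (i + N)
          exact mul_le_mul (lp.norm_apply_le_norm (by norm_num) a _) h1
            (norm_nonneg _) (norm_nonneg _)
    _ = ‖a‖ * ((1/2)^N * 2) := by
        rw [tsum_mul_left, tsum_mul_left, tsum_geometric_two]

lemma T_compact : IsCompactOperator (T hc) := by
  apply isCompactOperator_of_tendsto (l := atTop) (F := fun N => TN hc N)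
  · rw [tendsto_iff_norm_sub_tendsto_zero]
    apply squeeze_zero (fun N => norm_nonneg _) (g := fun N => 2 * (1/2)^N)
    · intro N
      apply ContinuousLinearMap.opNorm_le_bound _ (by positivity)
      intro a
      have := T_sub_TN hc N a
      calc ‖(TN hc N - T hc) a‖ = ‖T hc a - TN hc N a‖ := by
            rw [ContinuousLinearMap.sub_apply, norm_sub_rev]
        _ ≤ ‖a‖ * ((1/2)^N * 2) := this
        _ = 2 * (1/2)^N * ‖a‖ := by ring
    · have := tendsto_pow_atTop_nhds_zero_of_lt_one (by norm_num : (0:ℝ) ≤ 1/2) (by norm_num : (1:ℝ)/2 < 1)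
      simpa using this.const_mul 2
  · exact Filter.Eventually.of_forall (TN_compact hc)

instance : SeparableSpace H := by
  have hd : Dense (↑(Submodule.span ℝ (Set.range fun n : ℕ => lp.single 2 n (1:ℝ))) : Set H) := by
    intro f
    have hs := lp.hasSum_single (E := fun _ : ℕ => ℝ) (p := 2) (by norm_num) f
    apply mem_closure_of_tendsto hs.tendsto_sum_nat
    filter_upwards with n
    apply Submodule.sum_mem
    intro i _
    have h1 : lp.single 2 i (f i : ℝ) = (f i : ℝ) • (lp.single 2 i (1:ℝ) : H) := by
      rw [← lp.single_smul]
      congr 1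
      simp [smul_eq_mul]
    rw [h1]
    exact Submodule.smul_mem _ _ (Submodule.subset_span ⟨i, rfl⟩)
  have h2 : IsSeparable (closure (↑(Submodule.span ℝ
      (Set.range fun n : ℕ => lp.single 2 n (1:ℝ))) : Set H)) :=
    ((Set.countable_range _).isSeparable.span).closure
  rw [hd.closure_eq] at h2
  exact isSeparable_univ_iff.mp h2

instance : SecondCountableTopology H :=
  UniformSpace.secondCountable_of_separable H

end Stmt13

/-- A compact dense embedding of a separable Hilbert space `Y` into `X`. -/
structure CompactHilbertEmbedding (X : Type) [NormedAddCommGroup X] [NormedSpace ℝ X] where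
  Y : Type
  [instNorm : NormedAddCommGroup Y]
  [instInner : InnerProductSpace ℝ Y]
  [instComplete : CompleteSpace Y]
  [instSep : TopologicalSpace.SeparableSpace Y]
  S : Y →L[ℝ] X
  inj : Function.Injective S
  compact : IsCompactOperator (⇑S)
  dense : DenseRange S

/-- Every separable Banach space `X` admits a separable Hilbert space `Y` and a bounded
linear operator `S : Y → X` that is injective, compact, and has dense image. -/
theorem stmt_13 (X : Type) [NormedAddCommGroup X] [NormedSpace ℝ X] [CompleteSpace X]
    [TopologicalSpace.SeparableSpace X] :
    Nonempty (CompactHilbertEmbedding X) := by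
  classical
  open Stmt13 in
  obtain ⟨d, hd⟩ := TopologicalSpace.exists_dense_seq X
  set x : ℕ → X := fun n => if d n = 0 then 0 else ‖d n‖⁻¹ • d n with hx
  set c : ℕ → X := fun n => ((2:ℝ)^n)⁻¹ • x n with hcdef
  have hxle : ∀ n, ‖x n‖ ≤ 1 := by
    intro n
    by_cases h : d n = 0
    · simp [hx, h]
    · simp only [hx, if_neg h, norm_smul, norm_inv, norm_norm]
      rw [inv_mul_cancel₀ (norm_ne_zero_iff.mpr h)]
  have hc : ∀ n, ‖c n‖ ≤ (1/2)^n := by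
    intro n
    rw [hcdef]
    simp only [norm_smul, norm_inv, norm_pow, Real.norm_two, one_div, inv_pow]
    calc ((2:ℝ)^n)⁻¹ * ‖x n‖ ≤ ((2:ℝ)^n)⁻¹ * 1 := by
          apply mul_le_mul_of_nonneg_left (hxle n) (by positivity)
      _ = ((2:ℝ)^n)⁻¹ := by ring
  -- the operator T : H → X
  set T₀ := Stmt13.T hc with hT₀
  have hrange : ∀ n, d n ∈ closure (Set.range T₀) := by
    intro n
    by_cases h : d n = 0
    · rw [h]
      exact subset_closure ⟨0, map_zero _⟩
    · have h1 : c n ∈ LinearMap.range (T₀ : Stmt13.H →ₗ[ℝ] X) := ⟨lp.single 2 n 1, Stmt13.T_single hc n⟩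
      have hn0 : ‖d n‖ ≠ 0 := norm_ne_zero_iff.mpr h
      have h2 : ((2:ℝ)^n * ‖d n‖) • c n = d n := by
        have hxn : c n = ((2:ℝ)^n)⁻¹ • ‖d n‖⁻¹ • d n := by
          rw [hcdef]; simp [hx, if_neg h]
        rw [hxn, smul_smul, smul_smul]
        convert one_smul ℝ (d n) using 2
        field_simp
      have h3 : d n ∈ (LinearMap.range (T₀ : Stmt13.H →ₗ[ℝ] X)).topologicalClosure := by
        rw [← h2]
        exact Submodule.smul_mem _ _ (Submodule.le_topologicalClosure _ h1)
      have h4 : d n ∈ closure ((LinearMap.range (T₀ : Stmt13.H →ₗ[ℝ] X) : Submodule ℝ X) : Set X) := h3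
      rwa [LinearMap.coe_range] at h4
  have hdenseT : DenseRange T₀ := by
    have hsub : closure (Set.range d) ⊆ closure (Set.range T₀) :=
      closure_minimal (Set.range_subset_iff.mpr hrange) isClosed_closure
    intro y
    exact hsub (by rw [hd.closure_eq]; trivial)
  set K := LinearMap.ker (T₀ : Stmt13.H →ₗ[ℝ] X) with hK
  haveI : CompleteSpace K := (ContinuousLinearMap.isClosed_ker T₀).completeSpace_coe
  haveI : CompleteSpace Kᗮ := K.isClosed_orthogonal.completeSpace_coe
  set S₀ : ↥Kᗮ →L[ℝ] X := T₀.comp Kᗮ.subtypeL with hS₀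
  have hinj : Function.Injective S₀ := by
    rw [injective_iff_map_eq_zero]
    intro a ha
    have hmem : (a : Stmt13.H) ∈ K := ha
    have h0 : (inner ℝ ((a : Stmt13.H)) ((a : Stmt13.H)) : ℝ) = 0 :=
      (Submodule.mem_orthogonal K (a : Stmt13.H)).mp a.2 _ hmem
    exact Subtype.ext (inner_self_eq_zero.mp h0)
  have hcompact : IsCompactOperator (⇑S₀) :=
    (Stmt13.T_compact hc).comp_clm Kᗮ.subtypeL
  have hdenseS : DenseRange S₀ := by
    have hsub : Set.range T₀ ⊆ Set.range S₀ := by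
      rintro _ ⟨v, rfl⟩
      have hv : v ∈ K ⊔ Kᗮ := by
        rw [Submodule.sup_orthogonal_of_hasOrthogonalProjection]; trivial
      obtain ⟨k, hk, w, hw, rfl⟩ := Submodule.mem_sup.mp hv
      refine ⟨⟨w, hw⟩, ?_⟩
      have hk0 : T₀ k = 0 := hk
      simp [hS₀, map_add, hk0]
    exact hdenseT.mono hsub
  exact ⟨{ Y := ↥Kᗮ, S := S₀, inj := hinj, compact := hcompact, dense := hdenseS }⟩
end
end

section
/- Let X, Y, Z be Banach spaces with X reflexive, T ∈ L(X;Y) compact, and S ∈ L(X;Z) injective. Let 1 ≤ q < ∞ and {uₙ} ⊂ L^q(a,b;X) be bounded in L^q(a,b;X), such that vₙ(t) := S·uₙ(t) ∈ L^∞(a,b;Z), the sequence {vₙ} is bounded in L^∞(a,b;Z), and for a.e. t ∈ (a,b), vₙ(t) ⇀ v(t) weakly in Z. Then T·uₙ(t) converges strongly in L^q(a,b;Y). -/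
open Filter Topology MeasureTheory Set
open scoped ENNReal
open NormedSpace

theorem ehrling_aux {X Y Z : Type*} [NormedAddCommGroup X] [NormedSpace ℝ X]
    [NormedAddCommGroup Y] [NormedSpace ℝ Y]
    [NormedAddCommGroup Z] [NormedSpace ℝ Z]
    (hrefl : Function.Surjective (NormedSpace.inclusionInDoubleDual ℝ X))
    (T : X →L[ℝ] Y) (hT : IsCompactOperator (⇑T))
    (S : X →L[ℝ] Z) (hS : Function.Injective S)
    {ε : ℝ} (hε : 0 < ε) :
    ∃ s : Finset (StrongDual ℝ Z), ∀ x : X, ‖T x‖ ≤ ε * ‖x‖ + ∑ g ∈ s, |g (S x)| := by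
  classical
  by_contra hcon
  push_neg at hcon
  -- the bad sets
  set D : Finset (StrongDual ℝ Z) → ℕ → Set X := fun s n =>
    {x : X | ‖x‖ ≤ 1 ∧ ε ≤ ‖T x‖ ∧ ∀ g ∈ s, |g (S x)| ≤ 1 / (n + 1)} with hD
  have hTnorm : (0:ℝ) < ‖T‖ + 1 := by positivity
  -- nonemptiness
  have hne : ∀ s n, (D s n).Nonempty := by
    intro s n
    set c : ℝ := (n + 1) * (‖T‖ + 1) with hc
    have hcpos : 0 < c := by positivity
    obtain ⟨x, hx⟩ := hcon (s.image fun g => c • g)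
    have hsum : (0:ℝ) ≤ ∑ g ∈ s.image fun g => c • g, |g (S x)| :=
      Finset.sum_nonneg fun g _ => abs_nonneg _
    have hx0 : x ≠ 0 := by
      rintro rfl
      simp at hx
    have hxn : 0 < ‖x‖ := norm_pos_iff.mpr hx0
    have hTx1 : ε * ‖x‖ ≤ ‖T x‖ := by linarith
    have h1 : ‖T (‖x‖⁻¹ • x)‖ = ‖x‖⁻¹ * ‖T x‖ := by
      rw [T.map_smul, norm_smul, norm_inv, norm_norm]
    refine ⟨‖x‖⁻¹ • x, ?_, ?_, ?_⟩
    · simp [norm_smul, abs_of_nonneg (le_of_lt (inv_pos.mpr hxn)),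
        inv_mul_cancel₀ (ne_of_gt hxn)]
    · rw [h1]
      calc ε = (ε * ‖x‖) * ‖x‖⁻¹ := by field_simp
        _ ≤ ‖T x‖ * ‖x‖⁻¹ :=
            mul_le_mul_of_nonneg_right hTx1 (inv_pos.mpr hxn).le
        _ = ‖x‖⁻¹ * ‖T x‖ := by ring
    · intro g hg
      have hmem : c • g ∈ s.image fun g => c • g := Finset.mem_image_of_mem _ hg
      have hle1 : |(c • g) (S x)| ≤ ∑ h ∈ s.image fun g => c • g, |h (S x)| :=
        Finset.single_le_sum (f := fun h => |h (S x)|) (fun h _ => abs_nonneg _) hmem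
      have hle2 : ∑ h ∈ s.image fun g => c • g, |h (S x)| ≤ ‖T x‖ := by
        nlinarith [mul_pos hε hxn]
      have hTx : ‖T x‖ ≤ ‖T‖ * ‖x‖ := T.le_opNorm x
      have key : c * |g (S (‖x‖⁻¹ • x))| ≤ ‖T‖ := by
        have hSx : g (S (‖x‖⁻¹ • x)) = ‖x‖⁻¹ * g (S x) := by
          rw [S.map_smul, g.map_smul]; rfl
        have hcg : (c • g) (S x) = c * g (S x) := rfl
        rw [hSx, abs_mul, abs_of_nonneg (inv_pos.mpr hxn).le]
        have : |(c • g) (S x)| ≤ ‖T‖ * ‖x‖ := by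
          calc |(c • g) (S x)| ≤ ‖T x‖ := hle1.trans hle2
            _ ≤ ‖T‖ * ‖x‖ := hTx
        rw [hcg, abs_mul, abs_of_nonneg hcpos.le] at this
        calc c * (‖x‖⁻¹ * |g (S x)|) = ‖x‖⁻¹ * (c * |g (S x)|) := by ring
          _ ≤ ‖x‖⁻¹ * (‖T‖ * ‖x‖) :=
              mul_le_mul_of_nonneg_left this (inv_pos.mpr hxn).le
          _ = ‖T‖ := by field_simp
      have hn1 : (0:ℝ) < (n:ℝ) + 1 := by positivity
      rw [← mul_le_mul_iff_right₀ hcpos]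
      calc c * |g (S (‖x‖⁻¹ • x))| ≤ ‖T‖ := key
        _ ≤ ‖T‖ + 1 := by linarith
        _ = c * (1 / ((n:ℝ)+1)) := by rw [hc]; field_simp
  -- the filter of bad sets
  let F : Filter X := ⨅ p : Finset (StrongDual ℝ Z) × ℕ, 𝓟 (D p.1 p.2)
  have hdir : Directed (· ≥ ·) (fun p : Finset (StrongDual ℝ Z) × ℕ => 𝓟 (D p.1 p.2)) := by
    rintro ⟨s, n⟩ ⟨t, m⟩
    refine ⟨(s ∪ t, max n m), ?_, ?_⟩ <;>
    · refine Filter.principal_mono.mpr ?_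
      rintro x ⟨h1, h2, h3⟩
      refine ⟨h1, h2, fun g hg => ?_⟩
      refine le_trans (h3 g (by simp [Finset.mem_union, hg])) ?_
      apply one_div_le_one_div_of_le (by positivity)
      have : (n:ℝ) ≤ max n m := by exact_mod_cast Nat.le_max_left n m
      have : (m:ℝ) ≤ max n m := by exact_mod_cast Nat.le_max_right n m
      linarith
  haveI hFne : F.NeBot :=
    iInf_neBot_of_directed hdir (fun p => Filter.principal_neBot_iff.mpr (hne p.1 p.2))
  have hFle : ∀ s n, F ≤ 𝓟 (D s n) := fun s n => iInf_le _ (s, n)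
  -- the double dual inclusion
  set J : X →L[ℝ] StrongDual ℝ (StrongDual ℝ X) := inclusionInDoubleDual ℝ X with hJ
  have hJinj : Function.Injective J := by
    intro x y h
    rw [eq_iff_forall_dual_eq ℝ]
    intro g
    have := congrArg (fun ξ : StrongDual ℝ (StrongDual ℝ X) => ξ g) h
    simpa [hJ] using this
  let e : X ≃ StrongDual ℝ (StrongDual ℝ X) := Equiv.ofBijective J ⟨hJinj, hrefl⟩
  have he : ∀ x, e x = J x := fun x => rfl
  let Jw : X → WeakDual ℝ (StrongDual ℝ X) := fun x => StrongDual.toWeakDual (J x)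
  -- Banach-Alaoglu
  have hK : IsCompact (WeakDual.toStrongDual ⁻¹' Metric.closedBall 0 1 :
      Set (WeakDual ℝ (StrongDual ℝ X))) := WeakDual.isCompact_closedBall (𝕜 := ℝ) 0 1
  have hsub : D ∅ 0 ⊆ Jw ⁻¹' (WeakDual.toStrongDual ⁻¹' Metric.closedBall 0 1) := by
    rintro x ⟨h1, -, -⟩
    simp only [Set.mem_preimage, mem_closedBall_zero_iff]
    show (WeakDual.toStrongDual (Jw x) : StrongDual ℝ (StrongDual ℝ X)) ∈ Metric.closedBall 0 1
    exact (mem_closedBall_zero_iff (E := StrongDual ℝ (StrongDual ℝ X))).mpr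
      (le_trans (double_dual_bound ℝ X x) h1)
  have hFdK : F.map Jw ≤ 𝓟 (WeakDual.toStrongDual ⁻¹' Metric.closedBall 0 1) := by
    rw [Filter.le_principal_iff, Filter.mem_map]
    exact Filter.mem_of_superset (Filter.le_principal_iff.mp (hFle ∅ 0)) hsub
  obtain ⟨ξ₀, hξ₀K, hcl⟩ := hK hFdK
  haveI := hcl.neBot
  let U : Ultrafilter (WeakDual ℝ (StrongDual ℝ X)) := Ultrafilter.of (𝓝 ξ₀ ⊓ F.map Jw)
  have hUn : (U : Filter _) ≤ 𝓝 ξ₀ := (Ultrafilter.of_le _).trans inf_le_left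
  have hUF : (U : Filter _) ≤ F.map Jw := (Ultrafilter.of_le _).trans inf_le_right
  set x₀ : X := e.symm (WeakDual.toStrongDual ξ₀) with hx₀def
  have hex₀ : (J x₀ : StrongDual ℝ (StrongDual ℝ X)) = WeakDual.toStrongDual ξ₀ := by
    rw [← he]; exact e.apply_symm_apply _
  let V : Ultrafilter X := U.map fun ξ => e.symm (WeakDual.toStrongDual ξ)
  have hVcoe : (V : Filter X) = Filter.map (fun ξ => e.symm (WeakDual.toStrongDual ξ)) U :=
    Ultrafilter.coe_map _ _
  -- membership of the bad sets in V
  have hmemV : ∀ s n, D s n ∈ V := by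
    intro s n
    have h1 : Jw '' D s n ∈ U := by
      apply hUF
      rw [Filter.mem_map]
      exact Filter.mem_of_superset (Filter.le_principal_iff.mp (hFle s n))
        (Set.subset_preimage_image _ _)
    have h2 : Jw '' D s n ⊆ (fun ξ => e.symm (WeakDual.toStrongDual ξ)) ⁻¹' D s n := by
      rintro ξ ⟨x, hx, rfl⟩
      have h3 : WeakDual.toStrongDual (Jw x) = e x := rfl
      rw [Set.mem_preimage, h3, Equiv.symm_apply_apply]
      exact hx
    exact Ultrafilter.mem_map.mpr (Filter.mem_of_superset h1 h2)
  -- weak convergence of V to x₀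
  have hevalV : ∀ f : StrongDual ℝ X, Tendsto (fun x => f x) (V : Filter X) (𝓝 (f x₀)) := by
    intro f
    have hcont : Continuous fun ξ : WeakDual ℝ (StrongDual ℝ X) => ξ f := WeakDual.eval_continuous f
    have h1 : Tendsto (fun ξ : WeakDual ℝ (StrongDual ℝ X) => ξ f) (U : Filter _) (𝓝 (ξ₀ f)) :=
      (hcont.tendsto ξ₀).mono_left hUn
    have heq : ∀ ξ : WeakDual ℝ (StrongDual ℝ X), f (e.symm (WeakDual.toStrongDual ξ)) = ξ f := by
      intro ξ
      have h2 : (J (e.symm (WeakDual.toStrongDual ξ)) : StrongDual ℝ (StrongDual ℝ X)) =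
          WeakDual.toStrongDual ξ := by rw [← he]; exact e.apply_symm_apply _
      exact congrArg (fun η : StrongDual ℝ (StrongDual ℝ X) => η f) h2
    have hval : ξ₀ f = f x₀ := by
      exact (congrArg (fun η : StrongDual ℝ (StrongDual ℝ X) => η f) hex₀).symm
    rw [hVcoe, Filter.tendsto_map'_iff]
    rw [hval] at h1
    refine h1.congr fun ξ => ?_
    exact (heq ξ).symm
  -- S x₀ = 0, hence x₀ = 0
  have hgz : ∀ g : StrongDual ℝ Z, g (S x₀) = 0 := by
    intro g
    have htd : Tendsto (fun x => g (S x)) (V : Filter X) (𝓝 (g (S x₀))) := hevalV (g.comp S)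
    have hb : ∀ n : ℕ, |g (S x₀)| ≤ 1 / ((n:ℝ) + 1) := by
      intro n
      have hmem : ∀ᶠ x in (V : Filter X), |g (S x)| ≤ 1 / ((n:ℝ) + 1) :=
        Filter.mem_of_superset (hmemV {g} n) fun x hx => hx.2.2 g (Finset.mem_singleton_self g)
      exact le_of_tendsto htd.abs hmem
    have h0 : Tendsto (fun n : ℕ => 1 / ((n:ℝ) + 1)) atTop (𝓝 0) :=
      tendsto_one_div_add_atTop_nhds_zero_nat
    have hle0 : |g (S x₀)| ≤ 0 := ge_of_tendsto h0 (Filter.Eventually.of_forall hb)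
    exact abs_eq_zero.mp (le_antisymm hle0 (abs_nonneg _))
  have hSx₀ : S x₀ = 0 := eq_zero_of_forall_dual_eq_zero ℝ hgz
  have hx₀0 : x₀ = 0 := hS (by rw [hSx₀, map_zero])
  -- the compact operator part
  obtain ⟨KY, hKY, hKYsub⟩ :=
    hT.image_closedBall_subset_compact (𝕜₁ := ℝ) (f := (T : X →ₗ[ℝ] Y)) 1
  let W : Ultrafilter Y := V.map T
  have hWle : (W : Filter Y) ≤ 𝓟 KY := by
    rw [Filter.le_principal_iff, Ultrafilter.mem_coe, Ultrafilter.mem_map]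
    refine Filter.mem_of_superset (hmemV ∅ 0) ?_
    intro x hx
    exact hKYsub ⟨x, mem_closedBall_zero_iff.mpr hx.1, rfl⟩
  obtain ⟨y, hyK, hyle⟩ := hKY.ultrafilter_le_nhds W hWle
  have hyε : ε ≤ ‖y‖ := by
    have hclosed : IsClosed {z : Y | ε ≤ ‖z‖} := isClosed_le continuous_const continuous_norm
    have hmem : ∀ᶠ z in (W : Filter Y), z ∈ {z : Y | ε ≤ ‖z‖} := by
      refine Ultrafilter.mem_map.mpr (Filter.mem_of_superset (hmemV ∅ 0) ?_)
      intro x hx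
      exact hx.2.1
    have : y ∈ closure {z : Y | ε ≤ ‖z‖} :=
      mem_closure_of_tendsto (Filter.tendsto_id'.mpr hyle) hmem
    rwa [hclosed.closure_eq] at this
  have hyT : y = T x₀ := by
    rw [eq_iff_forall_dual_eq ℝ]
    intro f
    have h1 : Tendsto f (W : Filter Y) (𝓝 (f y)) := (f.continuous.tendsto y).mono_left hyle
    have h2 : Tendsto (fun x => f (T x)) (V : Filter X) (𝓝 (f (T x₀))) := hevalV (f.comp T)
    have hWcoe : (W : Filter Y) = Filter.map T (V : Filter X) := Ultrafilter.coe_map _ _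
    rw [hWcoe, Filter.tendsto_map'_iff] at h1
    exact tendsto_nhds_unique h1 h2
  rw [hx₀0, map_zero] at hyT
  rw [hyT, norm_zero] at hyε
  linarith

section AuxPart2
variable {X Z : Type*} [NormedAddCommGroup X] [NormedSpace ℝ X]
    [NormedAddCommGroup Z] [NormedSpace ℝ Z]
-- scalar convergence lemma
theorem scal_conv (S : X →L[ℝ] Z) (a b : ℝ) (q : ℝ) (hq0 : 0 < q)
    (u : ℕ → ℝ → X) (v : ℝ → Z)
    (hmeasu : ∀ n, AEStronglyMeasurable (u n) (volume.restrict (Set.Ioo a b)))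
    {Mi : ℝ≥0∞} (hMi : Mi ≠ ⊤)
    (hMib : ∀ n, eLpNorm (fun t => S (u n t)) ⊤ (volume.restrict (Set.Ioo a b)) ≤ Mi)
    (hconv : ∀ᵐ t ∂(volume.restrict (Set.Ioo a b)),
      ∀ g : StrongDual ℝ Z,
        Tendsto (fun n => g (S (u n t))) atTop (𝓝 (g (v t))))
    (g : StrongDual ℝ Z) :
    Tendsto (fun n => eLpNorm (fun t => g (S (u n t)) - g (v t)) (ENNReal.ofReal q)
      (volume.restrict (Set.Ioo a b))) atTop (𝓝 0) := by
  set μ := volume.restrict (Set.Ioo a b) with hμ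
  set p := ENNReal.ofReal q with hp
  have hp0 : p ≠ 0 := (ENNReal.ofReal_pos.mpr hq0).ne'
  have hptop : p ≠ ⊤ := ENNReal.ofReal_ne_top
  have hpq : p.toReal = q := ENNReal.toReal_ofReal hq0.le
  -- a.e. bound on ‖S (u n t)‖
  have haeb : ∀ᵐ t ∂μ, ∀ n, ‖S (u n t)‖ ≤ Mi.toReal := by
    rw [ae_all_iff]
    intro n
    have h := enorm_ae_le_eLpNormEssSup (fun t => S (u n t)) μ
    filter_upwards [h] with t ht
    have h2 : (‖S (u n t)‖₊ : ℝ≥0∞) ≤ Mi := ht.trans (by rw [← eLpNorm_exponent_top]; exact hMib n)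
    have := ENNReal.toReal_mono hMi h2
    simpa using this
  set R : ℝ := ‖g‖ * Mi.toReal with hR
  have hR0 : 0 ≤ R := mul_nonneg (norm_nonneg _) ENNReal.toReal_nonneg
  -- a.e. bound on |g (v t)|
  have haev : ∀ᵐ t ∂μ, |g (v t)| ≤ R := by
    filter_upwards [hconv, haeb] with t ht hbt
    refine le_of_tendsto (ht g).abs (Eventually.of_forall fun n => ?_)
    calc |g (S (u n t))| ≤ ‖g‖ * ‖S (u n t)‖ := g.le_opNorm _
      _ ≤ ‖g‖ * Mi.toReal := by
          exact mul_le_mul_of_nonneg_left (hbt n) (norm_nonneg _)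
  -- measurability
  have hmeasgn : ∀ n, AEStronglyMeasurable (fun t => g (S (u n t))) μ := fun n =>
    (g.continuous.comp S.continuous).comp_aestronglyMeasurable (hmeasu n)
  have hmeasgv : AEStronglyMeasurable (fun t => g (v t)) μ := by
    apply aestronglyMeasurable_of_tendsto_ae atTop hmeasgn
    filter_upwards [hconv] with t ht using ht g
  -- dominated convergence at the lintegral level
  have hlint : Tendsto (fun n => ∫⁻ t, (‖g (S (u n t)) - g (v t)‖₊ : ℝ≥0∞) ^ q ∂μ)
      atTop (𝓝 0) := by
    have hzero : (0 : ℝ≥0∞) = ∫⁻ (_ : ℝ), (0:ℝ≥0∞) ∂μ := by simp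
    rw [hzero]
    refine tendsto_lintegral_of_dominated_convergence'
      (fun _ => (ENNReal.ofReal (2 * R + 1)) ^ q) (fun n => ?_) ?_ ?_ ?_
    · exact (ENNReal.continuous_rpow_const.measurable.comp_aemeasurable
        ((hmeasgn n).sub hmeasgv).enorm)
    · intro n
      filter_upwards [haeb, haev] with t hbt hvt
      have h1 : ‖g (S (u n t)) - g (v t)‖ ≤ 2 * R + 1 := by
        have h2 : |g (S (u n t))| ≤ R := by
          calc |g (S (u n t))| ≤ ‖g‖ * ‖S (u n t)‖ := g.le_opNorm _
            _ ≤ R := mul_le_mul_of_nonneg_left (hbt n) (norm_nonneg _)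
        calc ‖g (S (u n t)) - g (v t)‖ ≤ |g (S (u n t))| + |g (v t)| := norm_sub_le _ _
          _ ≤ 2 * R + 1 := by linarith
      have h3 : (‖g (S (u n t)) - g (v t)‖₊ : ℝ≥0∞) ≤ ENNReal.ofReal (2 * R + 1) := by
        rw [← ENNReal.ofReal_coe_nnreal, coe_nnnorm]
        exact ENNReal.ofReal_le_ofReal h1
      exact ENNReal.rpow_le_rpow h3 hq0.le
    · rw [lintegral_const]
      apply ENNReal.mul_ne_top
      · exact ENNReal.rpow_ne_top_of_nonneg hq0.le ENNReal.ofReal_ne_top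
      · rw [hμ, Measure.restrict_apply_univ, Real.volume_Ioo]
        exact ENNReal.ofReal_ne_top
    · filter_upwards [hconv] with t ht
      have h1 : Tendsto (fun n => g (S (u n t)) - g (v t)) atTop (𝓝 0) := by
        have := (ht g).sub (tendsto_const_nhds (x := g (v t)))
        simpa using this
      have h2 : Tendsto (fun n => (‖g (S (u n t)) - g (v t)‖₊ : ℝ≥0∞)) atTop (𝓝 0) := by
        have hc : Continuous fun r : ℝ => (‖r‖₊ : ℝ≥0∞) :=
          ENNReal.continuous_coe.comp continuous_nnnorm
        have := (hc.tendsto 0).comp h1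
        simpa [Function.comp_def] using this
      have := ((ENNReal.continuous_rpow_const (y := q)).tendsto 0).comp h2
      simpa [Function.comp_def, ENNReal.zero_rpow_of_pos hq0] using this
  have heq : ∀ n, eLpNorm (fun t => g (S (u n t)) - g (v t)) p μ
      = (∫⁻ t, (‖g (S (u n t)) - g (v t)‖₊ : ℝ≥0∞) ^ q ∂μ) ^ (1/q) := by
    intro n
    rw [eLpNorm_eq_lintegral_rpow_enorm_toReal hp0 hptop, hpq]
    rfl
  have hfin := ((ENNReal.continuous_rpow_const (y := 1/q)).tendsto 0).comp hlint
  rw [ENNReal.zero_rpow_of_pos (by positivity : (0:ℝ) < 1/q)] at hfin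
  simpa [Function.comp_def, heq] using hfin

end AuxPart2

/-- Aubin–Lions type compactness lemma: with `X` reflexive, `T : X → Y` compact and
`S : X → Z` injective, if `{uₙ}` is bounded in `L^q(a,b;X)`, `vₙ = S·uₙ` is bounded in
`L^∞(a,b;Z)` and `vₙ(t) ⇀ v(t)` weakly in `Z` for a.e. `t`, then `T·uₙ` converges
strongly in `L^q(a,b;Y)`. -/
theorem stmt_15 {X Y Z : Type*} [NormedAddCommGroup X] [NormedSpace ℝ X] [CompleteSpace X]
    [NormedAddCommGroup Y] [NormedSpace ℝ Y] [CompleteSpace Y]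
    [NormedAddCommGroup Z] [NormedSpace ℝ Z]
    (hrefl : Function.Surjective (NormedSpace.inclusionInDoubleDual ℝ X))
    (T : X →L[ℝ] Y) (hT : IsCompactOperator (⇑T))
    (S : X →L[ℝ] Z) (hS : Function.Injective S)
    (a b : ℝ) (hab : a < b) (q : ℝ) (hq1 : 1 ≤ q)
    (u : ℕ → ℝ → X) (v : ℝ → Z)
    (hu : ∀ n, MemLp (u n) (ENNReal.ofReal q) (volume.restrict (Set.Ioo a b)))
    (hubdd : ∃ M : ℝ≥0∞, M ≠ ⊤ ∧
      ∀ n, eLpNorm (u n) (ENNReal.ofReal q) (volume.restrict (Set.Ioo a b)) ≤ M)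
    (hv : ∀ n, MemLp (fun t => S (u n t)) ⊤ (volume.restrict (Set.Ioo a b)))
    (hvbdd : ∃ M : ℝ≥0∞, M ≠ ⊤ ∧
      ∀ n, eLpNorm (fun t => S (u n t)) ⊤ (volume.restrict (Set.Ioo a b)) ≤ M)
    (hconv : ∀ᵐ t ∂(volume.restrict (Set.Ioo a b)),
      ∀ g : StrongDual ℝ Z,
        Tendsto (fun n => g (S (u n t))) atTop (𝓝 (g (v t)))) :
    ∃ w : ℝ → Y,
      Tendsto
        (fun n => eLpNorm (fun t => T (u n t) - w t) (ENNReal.ofReal q)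
          (volume.restrict (Set.Ioo a b)))
        atTop (𝓝 0) := by
  classical
  set μ := volume.restrict (Set.Ioo a b) with hμ
  set p := ENNReal.ofReal q with hp
  have hq0 : 0 < q := lt_of_lt_of_le zero_lt_one hq1
  have hp1 : 1 ≤ p := by
    rw [hp, ← ENNReal.ofReal_one]
    exact ENNReal.ofReal_le_ofReal hq1
  haveI : Fact (1 ≤ p) := ⟨hp1⟩
  obtain ⟨Mq, hMq, hMqb⟩ := hubdd
  obtain ⟨Mi, hMi, hMib⟩ := hvbdd
  have hmeasu : ∀ n, AEStronglyMeasurable (u n) μ := fun n => (hu n).aestronglyMeasurable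
  have hscal := scal_conv S a b q hq0 u v hmeasu hMi hMib hconv
  -- the Lp elements
  have hTu : ∀ n, MemLp (fun t => T (u n t)) p μ := fun n => T.comp_memLp' (hu n)
  set fn : ℕ → Lp Y p μ := fun n => (hTu n).toLp _ with hfn
  -- measurability of the scalar terms
  have hmeasgn : ∀ (g : StrongDual ℝ Z) n, AEStronglyMeasurable (fun t => g (S (u n t))) μ :=
    fun g n => (g.continuous.comp S.continuous).comp_aestronglyMeasurable (hmeasu n)
  have hmeasgv : ∀ g : StrongDual ℝ Z, AEStronglyMeasurable (fun t => g (v t)) μ := by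
    intro g
    apply aestronglyMeasurable_of_tendsto_ae atTop (hmeasgn g)
    filter_upwards [hconv] with t ht using ht g
  -- main quantitative claim
  have hMR : Mq ≤ ENNReal.ofReal (Mq.toReal + 1) := by
    calc Mq = ENNReal.ofReal Mq.toReal := (ENNReal.ofReal_toReal hMq).symm
      _ ≤ ENNReal.ofReal (Mq.toReal + 1) := ENNReal.ofReal_le_ofReal (by linarith)
  have key : ∀ δ : ℝ, 0 < δ → ∃ N : ℕ, ∀ m, N ≤ m → ∀ n, N ≤ n →
      eLpNorm (fun t => T (u m t) - T (u n t)) p μ ≤ ENNReal.ofReal (δ/2) := by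
    intro δ hδ
    set MR : ℝ := Mq.toReal + 1 with hMRdef
    have hMR0 : 0 < MR := by positivity
    set ε : ℝ := δ / (8 * MR) with hεdef
    have hε : 0 < ε := by positivity
    obtain ⟨s, hs⟩ := ehrling_aux hrefl T hT S hS hε
    set η : ℝ := δ / (8 * (s.card + 1)) with hηdef
    have hη : 0 < η := by positivity
    have hev : ∀ᶠ n in atTop, ∀ g ∈ s,
        eLpNorm (fun t => g (S (u n t)) - g (v t)) p μ < ENNReal.ofReal η := by
      rw [Filter.eventually_all_finset]
      intro g hg
      exact (hscal g).eventually (gt_mem_nhds (ENNReal.ofReal_pos.mpr hη))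
    obtain ⟨N, hN⟩ := Filter.eventually_atTop.mp hev
    refine ⟨N, fun m hm n hn => ?_⟩
    -- pointwise estimate
    have hpt : ∀ t, ‖T (u m t) - T (u n t)‖ ≤
        ε * ‖u m t‖ + ε * ‖u n t‖ +
        ((∑ g ∈ s, |g (S (u m t)) - g (v t)|) + (∑ g ∈ s, |g (S (u n t)) - g (v t)|)) := by
      intro t
      have h1 : ‖T (u m t) - T (u n t)‖ = ‖T (u m t - u n t)‖ := by rw [map_sub]
      have h2 := hs (u m t - u n t)
      have h3 : ‖u m t - u n t‖ ≤ ‖u m t‖ + ‖u n t‖ := norm_sub_le _ _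
      have h4 : ∑ g ∈ s, |g (S (u m t - u n t))| ≤
          (∑ g ∈ s, |g (S (u m t)) - g (v t)|) + (∑ g ∈ s, |g (S (u n t)) - g (v t)|) := by
        rw [← Finset.sum_add_distrib]
        refine Finset.sum_le_sum fun g hg => ?_
        have h5 : g (S (u m t - u n t)) = g (S (u m t)) - g (S (u n t)) := by
          rw [map_sub, map_sub]
        rw [h5]
        calc |g (S (u m t)) - g (S (u n t))|
            ≤ |g (S (u m t)) - g (v t)| + |g (v t) - g (S (u n t))| := abs_sub_le _ _ _
          _ = |g (S (u m t)) - g (v t)| + |g (S (u n t)) - g (v t)| := by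
              rw [abs_sub_comm (g (v t))]
      calc ‖T (u m t) - T (u n t)‖ = ‖T (u m t - u n t)‖ := h1
        _ ≤ ε * ‖u m t - u n t‖ + ∑ g ∈ s, |g (S (u m t - u n t))| := h2
        _ ≤ ε * (‖u m t‖ + ‖u n t‖) +
            ((∑ g ∈ s, |g (S (u m t)) - g (v t)|) + (∑ g ∈ s, |g (S (u n t)) - g (v t)|)) := by
            have := mul_le_mul_of_nonneg_left h3 hε.le
            linarith
        _ = ε * ‖u m t‖ + ε * ‖u n t‖ +
            ((∑ g ∈ s, |g (S (u m t)) - g (v t)|) + (∑ g ∈ s, |g (S (u n t)) - g (v t)|)) := by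
            ring
    -- eLpNorm estimate
    have hmA : ∀ k, AEStronglyMeasurable (fun t => ε * ‖u k t‖) μ := fun k =>
      ((hmeasu k).norm.const_mul ε)
    have hmC : ∀ k, AEStronglyMeasurable (fun t => ∑ g ∈ s, |g (S (u k t)) - g (v t)|) μ := by
      intro k
      apply Finset.aestronglyMeasurable_fun_sum
      intro g hg
      have := ((hmeasgn g k).sub (hmeasgv g)).norm
      simpa [Real.norm_eq_abs] using this
    have hA : ∀ k, eLpNorm (fun t => ε * ‖u k t‖) p μ ≤ ENNReal.ofReal (δ/8) := by
      intro k
      have h1 : (fun t => ε * ‖u k t‖) = ε • (fun t => ‖u k t‖) := rfl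
      rw [h1, eLpNorm_const_smul, eLpNorm_norm]
      have h2 : (‖ε‖₊ : ℝ≥0∞) = ENNReal.ofReal ε := Real.enorm_eq_ofReal hε.le
      calc (‖ε‖₊ : ℝ≥0∞) • eLpNorm (u k) p μ = ENNReal.ofReal ε * eLpNorm (u k) p μ := by
            rw [h2]; rfl
        _ ≤ ENNReal.ofReal ε * ENNReal.ofReal MR := by
            exact mul_le_mul_right ((hMqb k).trans hMR) _
        _ = ENNReal.ofReal (ε * MR) := by
            rw [ENNReal.ofReal_mul hε.le]
        _ = ENNReal.ofReal (δ/8) := by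
            congr 1
            rw [hεdef]
            field_simp
    have hC : ∀ k, N ≤ k →
        eLpNorm (fun t => ∑ g ∈ s, |g (S (u k t)) - g (v t)|) p μ ≤ ENNReal.ofReal (δ/8) := by
      intro k hk
      have h1 : (fun t => ∑ g ∈ s, |g (S (u k t)) - g (v t)|) =
          ∑ g ∈ s, fun t => |g (S (u k t)) - g (v t)| := by
        funext t; rw [Finset.sum_apply]
      rw [h1]
      calc eLpNorm (∑ g ∈ s, fun t => |g (S (u k t)) - g (v t)|) p μ
          ≤ ∑ g ∈ s, eLpNorm (fun t => |g (S (u k t)) - g (v t)|) p μ := by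
            apply eLpNorm_sum_le _ hp1
            intro g hg
            have := ((hmeasgn g k).sub (hmeasgv g)).norm
            simpa [Real.norm_eq_abs] using this
        _ ≤ ∑ _g ∈ s, ENNReal.ofReal η := by
            refine Finset.sum_le_sum fun g hg => ?_
            have h3 : (fun t => |g (S (u k t)) - g (v t)|) =
                fun t => ‖g (S (u k t)) - g (v t)‖ := by
              funext t; rw [Real.norm_eq_abs]
            rw [h3, eLpNorm_norm]
            exact (hN k hk g hg).le
        _ = s.card * ENNReal.ofReal η := by
            rw [Finset.sum_const, nsmul_eq_mul]
        _ ≤ ENNReal.ofReal (s.card * η) := by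
            rw [ENNReal.ofReal_mul (by positivity)]
            gcongr
            simp [ENNReal.ofReal_natCast]
        _ ≤ ENNReal.ofReal (δ/8) := by
            apply ENNReal.ofReal_le_ofReal
            rw [hηdef, mul_div_assoc', div_le_div_iff₀ (by positivity) (by norm_num)]
            nlinarith [hδ.le, Nat.cast_nonneg (α := ℝ) s.card]
    calc eLpNorm (fun t => T (u m t) - T (u n t)) p μ
        ≤ eLpNorm (fun t => ε * ‖u m t‖ + ε * ‖u n t‖ +
            ((∑ g ∈ s, |g (S (u m t)) - g (v t)|) + (∑ g ∈ s, |g (S (u n t)) - g (v t)|))) p μ :=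
          eLpNorm_mono_real hpt
      _ ≤ eLpNorm (fun t => ε * ‖u m t‖ + ε * ‖u n t‖) p μ +
          eLpNorm (fun t => (∑ g ∈ s, |g (S (u m t)) - g (v t)|) +
            (∑ g ∈ s, |g (S (u n t)) - g (v t)|)) p μ := by
          exact eLpNorm_add_le ((hmA m).add (hmA n)) ((hmC m).add (hmC n)) hp1
      _ ≤ (eLpNorm (fun t => ε * ‖u m t‖) p μ + eLpNorm (fun t => ε * ‖u n t‖) p μ) +
          (eLpNorm (fun t => ∑ g ∈ s, |g (S (u m t)) - g (v t)|) p μ +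
           eLpNorm (fun t => ∑ g ∈ s, |g (S (u n t)) - g (v t)|) p μ) := by
          exact add_le_add (eLpNorm_add_le (hmA m) (hmA n) hp1)
            (eLpNorm_add_le (hmC m) (hmC n) hp1)
      _ ≤ (ENNReal.ofReal (δ/8) + ENNReal.ofReal (δ/8)) +
          (ENNReal.ofReal (δ/8) + ENNReal.ofReal (δ/8)) :=
          add_le_add (add_le_add (hA m) (hA n)) (add_le_add (hC m hm) (hC n hn))
      _ = ENNReal.ofReal (δ/2) := by
          rw [← ENNReal.ofReal_add (by positivity) (by positivity),
            ← ENNReal.ofReal_add (by positivity) (by positivity)]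
          congr 1
          ring
  -- Cauchy sequence in Lp
  have hcauchy : CauchySeq fn := by
    rw [Metric.cauchySeq_iff]
    intro δ hδ
    obtain ⟨N, hNkey⟩ := key δ hδ
    refine ⟨N, fun m hm n hn => ?_⟩
    have h1 : dist (fn m) (fn n) = (eLpNorm (fun t => T (u m t) - T (u n t)) p μ).toReal := by
      rw [dist_edist, Lp.edist_toLp_toLp]
      rfl
    rw [h1]
    have h2 := hNkey m hm n hn
    calc (eLpNorm (fun t => T (u m t) - T (u n t)) p μ).toReal
        ≤ (ENNReal.ofReal (δ/2)).toReal := ENNReal.toReal_mono ENNReal.ofReal_ne_top h2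
      _ = δ/2 := ENNReal.toReal_ofReal (by positivity)
      _ < δ := by linarith
  obtain ⟨L, hL⟩ := cauchySeq_tendsto_of_complete hcauchy
  refine ⟨⇑L, ?_⟩
  have heq : ∀ n, eLpNorm (fun t => T (u n t) - ⇑L t) p μ = edist (fn n) L := by
    intro n
    rw [Lp.edist_def]
    apply eLpNorm_congr_ae
    filter_upwards [(hTu n).coeFn_toLp] with t ht
    simp [Pi.sub_apply, ht, hfn]
  have hdist : Tendsto (fun n => dist (fn n) L) atTop (𝓝 0) :=
    tendsto_iff_dist_tendsto_zero.mp hL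
  have hedist : Tendsto (fun n => edist (fn n) L) atTop (𝓝 0) := by
    have h1 : ∀ n, edist (fn n) L = ENNReal.ofReal (dist (fn n) L) := fun n => edist_dist _ _
    have := (ENNReal.continuous_ofReal.tendsto 0).comp hdist
    simp only [Function.comp_def, ENNReal.ofReal_zero] at this
    simpa [h1] using this
  simpa [heq] using hedist
end
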